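/- arXiv:2110.15928 — 2 statements merged into one kernel-verified Lean document; each statement's English description precedes it below -/
import Mathlib

section
/- Fix H ∈ ℂ^{B×U}, Y_D ∈ ℂ^{B×D}, and γ ≥ 0. If the Hermitian matrix HᴴH − γ·I_U is positive semidefinite (equivalently, the smallest eigenvalue λ_min of HᴴH satisfies λ_min ≥ γ), then the function S_D ↦ ‖Y_D − H·S_D‖_F² − γ‖S_D‖_F² is convex on ℂ^{U×D} viewed as a real vector space. (Second half of Lemma 1: the relaxed JED objective is convex in S_D for fixed H when λ_min(HᴴH) ≥ γ.) -/
/-! The objective is quadratic in `S_D`, with quadratic part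
`‖H S‖_F² − γ‖S‖_F² = Re Tr(Sᴴ (HᴴH − γ I) S) ≥ 0`. Along a convex combination,
`a f x + b f y − f (a x + b y)` is `a b` times this quadratic part at `x − y`, hence nonnegative. -/

noncomputable section

open Matrix
open scoped ComplexOrder

def frobSq {m n : Type*} [Fintype m] [Fintype n] (A : Matrix m n ℂ) : ℝ :=
  ∑ i, ∑ j, ‖A i j‖ ^ 2

section FrobSq
variable {l m n : Type*} [Fintype l] [Fintype m] [Fintype n]

lemma frobSq_eq_re_trace (A : Matrix m n ℂ) : frobSq A = (Aᴴ * A).trace.re := by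
  simp only [frobSq, trace, diag_apply, mul_apply, conjTranspose_apply, RCLike.star_def,
    Complex.conj_mul', Complex.re_sum, ← Complex.ofReal_pow, Complex.ofReal_re]
  exact Finset.sum_comm

lemma frobSq_sub_comm (P Q : Matrix m n ℂ) : frobSq (P - Q) = frobSq (Q - P) := by
  simp only [frobSq, Matrix.sub_apply, norm_sub_rev]

lemma frobSq_smul_add_smul {a b : ℝ} (hab : a + b = 1) (P Q : Matrix m n ℂ) :
    frobSq (a • P + b • Q) = a * frobSq P + b * frobSq Q - a * b * frobSq (P - Q) := by
  simp only [frobSq, Finset.mul_sum, ← Finset.sum_add_distrib, ← Finset.sum_sub_distrib]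
  refine Finset.sum_congr rfl fun i _ => Finset.sum_congr rfl fun j _ => ?_
  simp only [Matrix.add_apply, Matrix.smul_apply, Matrix.sub_apply]
  rw [norm_add_sq_real, norm_sub_sq_real, norm_smul, norm_smul, real_inner_smul_left,
    real_inner_smul_right, Real.norm_eq_abs, Real.norm_eq_abs, mul_pow, mul_pow, sq_abs, sq_abs]
  obtain rfl := eq_sub_of_add_eq hab
  ring

lemma mul_frobSq_le_frobSq_mul [DecidableEq m] {γ : ℝ} {H : Matrix l m ℂ}
    (hpsd : (Hᴴ * H - (γ : ℂ) • (1 : Matrix m m ℂ)).PosSemidef) (W : Matrix m n ℂ) :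
    γ * frobSq W ≤ frobSq (H * W) := by
  have hexpand :
      Wᴴ * (Hᴴ * H - (γ : ℂ) • 1) * W = (H * W)ᴴ * (H * W) - (γ : ℂ) • (Wᴴ * W) := by
    simp only [Matrix.mul_sub, Matrix.sub_mul, conjTranspose_mul, Matrix.mul_smul,
      Matrix.smul_mul, Matrix.one_mul, Matrix.mul_assoc]
  have htrace := (hpsd.conjTranspose_mul_mul_same W).trace_nonneg
  rw [hexpand, trace_sub, trace_smul, Complex.nonneg_iff] at htrace
  rw [frobSq_eq_re_trace, frobSq_eq_re_trace, ← sub_nonneg]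
  simpa only [Complex.sub_re, smul_eq_mul, Complex.re_ofReal_mul] using htrace.1
end FrobSq

theorem relaxed_jed_convex_in_SD_general (B U D : ℕ)
    (H : Matrix (Fin B) (Fin U) ℂ) (Y_D : Matrix (Fin B) (Fin D) ℂ)
    (γ : ℝ)
    (hpsd : (Hᴴ * H - (γ : ℂ) • (1 : Matrix (Fin U) (Fin U) ℂ)).PosSemidef) :
    ConvexOn ℝ Set.univ (fun S_D : Matrix (Fin U) (Fin D) ℂ =>
      frobSq (Y_D - H * S_D) - γ * frobSq S_D) := by
  refine ⟨convex_univ, fun x _ y _ a b ha hb hab => ?_⟩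
  have hresidual : Y_D - H * (a • x + b • y) = a • (Y_D - H * x) + b • (Y_D - H * y) := by
    rw [Matrix.mul_add, Matrix.mul_smul, Matrix.mul_smul]
    linear_combination (norm := module) (-1 : ℝ) • hab • Y_D
  have hdiff : (Y_D - H * x) - (Y_D - H * y) = H * (y - x) := by
    rw [Matrix.mul_sub]; abel
  have hgap :=
    mul_nonneg (mul_nonneg ha hb) (sub_nonneg.2 (mul_frobSq_le_frobSq_mul hpsd (y - x)))
  simp only [smul_eq_mul]
  rw [hresidual, frobSq_smul_add_smul hab, frobSq_smul_add_smul hab, hdiff, frobSq_sub_comm x y]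
  linarith

/-- Second half of Lemma 1: for fixed `H` and `Y_D`, if `HᴴH − γ·I_U` is positive
semidefinite (i.e. `λ_min(HᴴH) ≥ γ`), then the relaxed JED objective
`S_D ↦ ‖Y_D − H·S_D‖_F² − γ‖S_D‖_F²` is convex on `ℂ^{U×D}` viewed as a real
vector space. -/
theorem relaxed_jed_convex_in_SD (B U D : ℕ)
    (H : Matrix (Fin B) (Fin U) ℂ) (Y_D : Matrix (Fin B) (Fin D) ℂ)
    (γ : ℝ) (hγ : 0 ≤ γ)
    (hpsd : (Hᴴ * H - (γ : ℂ) • (1 : Matrix (Fin U) (Fin U) ℂ)).PosSemidef) :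
    ConvexOn ℝ Set.univ (fun S_D : Matrix (Fin U) (Fin D) ℂ =>
      frobSq (Y_D - H * S_D) - γ * frobSq S_D) :=
  relaxed_jed_convex_in_SD_general B U D H Y_D γ hpsd
end
end

section
/- Let E be a real inner product space, let f, g : E → ℝ, let z_t, z⁺ ∈ E, let G_f, G ∈ E, let τ > 0 and γ ≥ 0. Suppose: (i) the proximal optimality condition G + G_f + (1/τ)(z⁺ − z_t) = 0 holds; (ii) G is a subgradient of the γ-weakly convex function g at z⁺ relative to z_t, in the sense that g(z_t) ≥ g(z⁺) + ⟨z_t − z⁺, G⟩ − (γ/2)‖z⁺ − z_t‖²; and (iii) the line-search condition f(z⁺) ≤ f(z_t) + ⟨z⁺ − z_t, G_f⟩ + (1/(2τ))‖z⁺ − z_t‖² holds. Then the sufficient-decrease inequality holds: f(z⁺) + g(z⁺) ≤ f(z_t) + g(z_t) − ((1 − τγ)/(2τ))‖z⁺ − z_t‖². (Key inequality in the proof of the convergence part of Theorem 1.) -/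
open scoped RealInnerProductSpace

/-- Key inequality in the proof of the convergence part of Theorem 1. In a real
inner product space `E`, suppose (i) the proximal optimality condition
`G + G_f + (1/τ)(z⁺ − z_t) = 0` holds, (ii) `G` is a subgradient of the γ-weakly
convex `g` at `z⁺` in the sense `g(z_t) ≥ g(z⁺) + ⟨z_t − z⁺, G⟩ − (γ/2)‖z⁺ − z_t‖²`,
and (iii) the line-search condition
`f(z⁺) ≤ f(z_t) + ⟨z⁺ − z_t, G_f⟩ + (1/(2τ))‖z⁺ − z_t‖²` holds. Then the
sufficient-decrease inequality
`f(z⁺) + g(z⁺) ≤ f(z_t) + g(z_t) − ((1 − τγ)/(2τ))‖z⁺ − z_t‖²` holds. -/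
theorem fbs_sufficient_decrease {E : Type*} [NormedAddCommGroup E]
    [InnerProductSpace ℝ E]
    (f g : E → ℝ) (zt zp Gf G : E) (τ γ : ℝ) (hτ : 0 < τ) (hγ : 0 ≤ γ)
    (hopt : G + Gf + (1 / τ) • (zp - zt) = 0)
    (hsub : g zt ≥ g zp + ⟪zt - zp, G⟫ - (γ / 2) * ‖zp - zt‖ ^ 2)
    (hls : f zp ≤ f zt + ⟪zp - zt, Gf⟫ + (1 / (2 * τ)) * ‖zp - zt‖ ^ 2) :
    f zp + g zp ≤ f zt + g zt - ((1 - τ * γ) / (2 * τ)) * ‖zp - zt‖ ^ 2 := by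
  have hG : G = -Gf - (1 / τ) • (zp - zt) := by
    have := hopt
    rw [← sub_eq_zero]
    abel_nf
    abel_nf at this
    linear_combination (norm := module) this
  have hinner : ⟪zt - zp, G⟫ = ⟪zp - zt, Gf⟫ + (1 / τ) * ‖zp - zt‖ ^ 2 := by
    rw [hG, inner_sub_right, inner_neg_right, real_inner_smul_right,
      show zt - zp = -(zp - zt) by abel, inner_neg_left, inner_neg_left,
      real_inner_self_eq_norm_sq]
    ring
  rw [hinner] at hsub
  have h1 : (1 - τ * γ) / (2 * τ) = 1 / (2 * τ) - γ / 2 := by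
    field_simp
  have h2 : 1 / τ = 2 * (1 / (2 * τ)) := by
    field_simp
  rw [h1]; rw [h2] at hsub
  linarith
end
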